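/- arXiv:2310.08689 — 2 statements merged into one kernel-verified Lean document; each statement's English description precedes it below -/
import Mathlib

section
/- The second-order formula ∀P (∃x₂(R(x₁,x₂) ∧ ∃x₃(R(x₂,x₃) ∧ P(x₃))) → ∃x₂(R(x₁,x₂) ∧ P(x₂))) is logically equivalent to ψ₀(x₁) := ∀x₂∀x₃(R(x₁,x₂) ∧ R(x₂,x₃) → R(x₁,x₃)). -/
/-- The second-order formula
`∀P (∃x₂(R(x₁,x₂) ∧ ∃x₃(R(x₂,x₃) ∧ P(x₃))) → ∃x₂(R(x₁,x₂) ∧ P(x₂)))`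
is logically equivalent to `ψ₀(x₁) := ∀x₂∀x₃(R(x₁,x₂) ∧ R(x₂,x₃) → R(x₁,x₃))`:
they hold in exactly the same structures `(α, R)` under the same values of `x₁`. -/
theorem stmt8 (α : Type) (R : α → α → Prop) (x₁ : α) :
    (∀ P : α → Prop,
        (∃ x₂, R x₁ x₂ ∧ ∃ x₃, R x₂ x₃ ∧ P x₃) → ∃ x₂, R x₁ x₂ ∧ P x₂) ↔
      (∀ x₂ x₃, R x₁ x₂ ∧ R x₂ x₃ → R x₁ x₃) := by
  constructor
  · rintro h x₂ x₃ ⟨h12, h23⟩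
    -- With `P` the singleton `{x₃}`, the promised `R`-successor of `x₁` can only be `x₃`.
    obtain ⟨_, h13, rfl⟩ := h (· = x₃) ⟨x₂, h12, x₃, h23, rfl⟩
    exact h13
  · rintro h P ⟨x₂, h12, x₃, h23, hP⟩
    exact ⟨x₃, h x₂ x₃ ⟨h12, h23⟩, hP⟩
end

section
/- In first-order logic over a relational signature, for unary predicates P and P' and any formula ψ in which neither P nor P' occurs in a given formula ϑ: if ψ ∧ P(x) ⊨ ϑ(x) and ϑ(x) ⊨ ((P'(x) ∧ ∀y(P'(y) → y = x)) → ψ'), where ψ' is ψ with P renamed to P', then ϑ(x) is logically equivalent to the second-order formula ∃P(ψ ∧ P(x)). -/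
theorem exists_and_apply_of_forall_singleton {α : Type*} {b : α} {Q : (α → Prop) → Prop}
    (h : ∀ P : α → Prop, P b ∧ (∀ y, P y → y = b) → Q P) : ∃ P, Q P ∧ P b :=
  ⟨(· = b), h _ ⟨rfl, fun _ => id⟩, rfl⟩

/-- Structures over the relational signature `σ` are abstracted as a domain `α` with
an interpretation `I : σInterp α`; the unary predicates `P` and `P'` (not occurring
in `ϑ`) are interpreted as functions `α → Prop`; `ψ` is a formula mentioning `P`,
rendered as a predicate `ψ α I P`, and its renaming `ψ'` is rendered as `ψ α I P'`;
the free variable `x` is assigned the value `b`. -/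
theorem stmt19 (σInterp : Type → Type)
    (ψ : ∀ α : Type, σInterp α → (α → Prop) → Prop)
    (ϑ : ∀ α : Type, σInterp α → α → Prop)
    (h1 : ∀ (α : Type) (I : σInterp α) (P : α → Prop) (b : α),
      ψ α I P ∧ P b → ϑ α I b)
    (h2 : ∀ (α : Type) (I : σInterp α) (P' : α → Prop) (b : α),
      ϑ α I b → ((P' b ∧ ∀ y, P' y → y = b) → ψ α I P')) :
    ∀ (α : Type) (I : σInterp α) (b : α),
      ϑ α I b ↔ ∃ P : α → Prop, ψ α I P ∧ P b :=
  fun α I b =>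
    ⟨fun hϑ => exists_and_apply_of_forall_singleton fun P => h2 α I P b hϑ,
      fun ⟨P, hP⟩ => h1 α I P b hP⟩
end
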